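/- The square of the shifted Jacobi matrix of μ^{[2]} equals Tᵀ·T; entrywise: for all n, m ≥ 0, Σ_j (J_{[2]}(n,j) − c·δ_{nj})·(J_{[2]}(j,m) − c·δ_{jm}) = Σ_k γ_{n,k}·γ_{m,k}, where the sum over k runs over all k ≥ 0 but has finitely many nonzero terms since γ_{n,k} = 0 unless n ≤ k ≤ n+2. -/
import Mathlib


open MeasureTheory Polynomial

/-- Squared norm `‖Q‖_μ² = ∫ Q(x)² dμ`. -/
noncomputable def nrmSq (μ : Measure ℝ) (Q : Polynomial ℝ) : ℝ := ∫ x, Q.eval x ^ 2 ∂μ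

/-- Squared norm in the 2-iterated Christoffel measure `(x-c)² dμ`. -/
noncomputable def nrmSq2 (μ : Measure ℝ) (c : ℝ) (Q : Polynomial ℝ) : ℝ :=
  ∫ x, Q.eval x ^ 2 * (x - c) ^ 2 ∂μ

/-- Sobolev-type inner product `⟨f,g⟩_S = ∫ f g dμ + M f(c) g(c) + N f'(c) g'(c)`. -/
noncomputable def ipS (μ : Measure ℝ) (c M N : ℝ) (f g : Polynomial ℝ) : ℝ :=
  (∫ x, f.eval x * g.eval x ∂μ) + M * (f.eval c * g.eval c)
    + N * ((derivative f).eval c * (derivative g).eval c)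

/-- Leading coefficient `r_n = 1/‖P_n‖_μ` of the orthonormal polynomial `p_n`. -/
noncomputable def rC (μ : Measure ℝ) (P : ℕ → Polynomial ℝ) (n : ℕ) : ℝ :=
  1 / Real.sqrt (nrmSq μ (P n))

/-- Leading coefficient `r_n^{[2]} = 1/‖P_n^{[2]}‖_{[2]}`. -/
noncomputable def r2C (μ : Measure ℝ) (c : ℝ) (P2 : ℕ → Polynomial ℝ) (n : ℕ) : ℝ :=
  1 / Real.sqrt (nrmSq2 μ c (P2 n))

/-- Orthonormal polynomial `p_n = P_n/‖P_n‖_μ`. -/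
noncomputable def onP (μ : Measure ℝ) (P : ℕ → Polynomial ℝ) (n : ℕ) : Polynomial ℝ :=
  C (rC μ P n) * P n

/-- Orthonormal polynomial `p_n^{[2]} = P_n^{[2]}/‖P_n^{[2]}‖_{[2]}`. -/
noncomputable def onP2 (μ : Measure ℝ) (c : ℝ) (P2 : ℕ → Polynomial ℝ) (n : ℕ) : Polynomial ℝ :=
  C (r2C μ c P2 n) * P2 n

/-- Leading coefficient `t_n = 1/‖S_n^{M,N}‖_S` of the Sobolev-type orthonormal polynomial. -/
noncomputable def tC (μ : Measure ℝ) (c M N : ℝ) (S : ℕ → Polynomial ℝ) (n : ℕ) : ℝ :=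
  1 / Real.sqrt (ipS μ c M N (S n) (S n))

/-- Sobolev-type orthonormal polynomial `s_n^{M,N} = S_n^{M,N}/‖S_n^{M,N}‖_S`. -/
noncomputable def sN (μ : Measure ℝ) (c M N : ℝ) (S : ℕ → Polynomial ℝ) (n : ℕ) : Polynomial ℝ :=
  C (tC μ c M N S n) * S n

/-- Diagonal kernel value `K_n(c,c) = Σ_{j=0}^n P_j(c)²/‖P_j‖_μ²`. -/
noncomputable def Kcc (μ : Measure ℝ) (P : ℕ → Polynomial ℝ) (c : ℝ) (n : ℕ) : ℝ :=
  ∑ j ∈ Finset.range (n + 1), (P j).eval c ^ 2 / nrmSq μ (P j)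

/-- Kernel `K_n^{(0,j)}(x,c)` as a polynomial in `x`:
`Σ_{k=0}^n (d/dy)^j P_k(y)|_{y=c} · P_k(x)/‖P_k‖_μ²`. -/
noncomputable def Kpoly (μ : Measure ℝ) (P : ℕ → Polynomial ℝ) (c : ℝ) (n j : ℕ) : Polynomial ℝ :=
  ∑ k ∈ Finset.range (n + 1), C ((derivative^[j] (P k)).eval c / nrmSq μ (P k)) * P k

/-- Mixed derivative of the kernel at the diagonal:
`K_n^{(i,j)}(c,c) = Σ_{k=0}^n P_k^{(i)}(c) P_k^{(j)}(c)/‖P_k‖_μ²`. -/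
noncomputable def Kder (μ : Measure ℝ) (P : ℕ → Polynomial ℝ) (c : ℝ) (n i j : ℕ) : ℝ :=
  ∑ k ∈ Finset.range (n + 1),
    (derivative^[i] (P k)).eval c * (derivative^[j] (P k)).eval c / nrmSq μ (P k)

/-- Connection coefficient `d_n`. -/
noncomputable def dCoef (P : ℕ → Polynomial ℝ) (c : ℝ) (n : ℕ) : ℝ :=
  ((P (n + 2)).eval c * (derivative (P n)).eval c
      - (derivative (P (n + 2))).eval c * (P n).eval c) /
    ((P (n + 1)).eval c * (derivative (P n)).eval c
      - (derivative (P (n + 1))).eval c * (P n).eval c)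

/-- Connection coefficient `e_n`. -/
noncomputable def eCoef (P : ℕ → Polynomial ℝ) (c : ℝ) (n : ℕ) : ℝ :=
  ((P (n + 2)).eval c * (derivative (P (n + 1))).eval c
      - (derivative (P (n + 2))).eval c * (P (n + 1)).eval c) /
    ((P (n + 1)).eval c * (derivative (P n)).eval c
      - (derivative (P (n + 1))).eval c * (P n).eval c)

/-- Connection coefficient `γ_{j,n} = ⟨s_n^{M,N}, p_j^{[2]}⟩_{[2]}`. -/
noncomputable def gamC (μ : Measure ℝ) (c M N : ℝ) (S P2 : ℕ → Polynomial ℝ) (j n : ℕ) : ℝ :=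
  ∫ x, (sN μ c M N S n).eval x * (onP2 μ c P2 j).eval x * (x - c) ^ 2 ∂μ

/-- Jacobi matrix of `μ`: `J(n,m) = ∫ x p_n(x) p_m(x) dμ`. -/
noncomputable def Jmat (μ : Measure ℝ) (P : ℕ → Polynomial ℝ) (n m : ℕ) : ℝ :=
  ∫ x, x * ((onP μ P n).eval x * (onP μ P m).eval x) ∂μ

/-- Jacobi matrix of `(x-c)² dμ`: `J_{[2]}(n,m) = ∫ x p_n^{[2]}(x) p_m^{[2]}(x) (x-c)² dμ`. -/
noncomputable def J2mat (μ : Measure ℝ) (c : ℝ) (P2 : ℕ → Polynomial ℝ) (n m : ℕ) : ℝ :=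
  ∫ x, x * ((onP2 μ c P2 n).eval x * (onP2 μ c P2 m).eval x) * (x - c) ^ 2 ∂μ

/-- Five-diagonal matrix `H(n,m) = ⟨(x-c)² s_n^{M,N}, s_m^{M,N}⟩_S`. -/
noncomputable def Hmat (μ : Measure ℝ) (c M N : ℝ) (S : ℕ → Polynomial ℝ) (n m : ℕ) : ℝ :=
  ipS μ c M N ((X - C c) ^ 2 * sN μ c M N S n) (sN μ c M N S m)

/-- Kronecker delta. -/
noncomputable def kdel (n m : ℕ) : ℝ := if n = m then 1 else 0

lemma integrable_polyEval (μ : Measure ℝ)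
    (hmom : ∀ n : ℕ, Integrable (fun x : ℝ => x ^ n) μ) (p : Polynomial ℝ) :
    Integrable (fun x => p.eval x) μ := by
  have : (fun x => p.eval x) =
      fun x => ∑ i ∈ Finset.range (p.natDegree + 1), p.coeff i * x ^ i := by
    funext x; exact eval_eq_sum_range x
  rw [this]
  exact integrable_finset_sum _ (fun i _ => (hmom i).const_mul _)

lemma expand_basis (G : ℕ → Polynomial ℝ) (hGm : ∀ n, (G n).Monic)
    (hGd : ∀ n, (G n).natDegree = n) :
    ∀ (d : ℕ) (f : Polynomial ℝ), f.degree < d →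
      ∃ b : ℕ → ℝ, f = ∑ j ∈ Finset.range d, C (b j) * G j := by
  intro d
  induction d with
  | zero =>
    intro f hf
    refine ⟨0, ?_⟩
    simp [Polynomial.degree_eq_bot.mp (by simpa using hf)]
  | succ d ih =>
    intro f hf
    by_cases h0 : f = 0
    · exact ⟨0, by simp [h0]⟩
    by_cases hd : f.degree < d
    · obtain ⟨b, hb⟩ := ih f hd
      refine ⟨Function.update b d 0, ?_⟩
      rw [Finset.sum_range_succ, Function.update_self]
      simp only [map_zero, zero_mul, add_zero]
      rw [hb]
      refine Finset.sum_congr rfl (fun j hj => ?_)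
      rw [Function.update_of_ne (Finset.mem_range.mp hj).ne]
    · have hnd : f.natDegree = d := by
        have h1 : f.natDegree < d + 1 := by
          rw [Polynomial.natDegree_lt_iff_degree_lt h0]; exact_mod_cast hf
        have h2 : (d : WithBot ℕ) ≤ f.degree := not_lt.mp hd
        have h3 : d ≤ f.natDegree := by
          rwa [Polynomial.degree_eq_natDegree h0, Nat.cast_le] at h2
        omega
      have hGdeg : (G d).degree = (d : WithBot ℕ) := by
        rw [Polynomial.degree_eq_natDegree (hGm d).ne_zero, hGd d]
      have hfdeg : f.degree = (d : WithBot ℕ) := by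
        rw [Polynomial.degree_eq_natDegree h0, hnd]
      set g := f - C f.leadingCoeff * G d with hg
      have hsub : g.degree < d := by
        have := Polynomial.degree_sub_lt (q := C f.leadingCoeff * G d) ?_ h0 ?_
        · rwa [hfdeg] at this
        · rw [hfdeg, Polynomial.degree_C_mul (by
            simp [Polynomial.leadingCoeff_ne_zero.mpr h0]), hGdeg]
        · rw [Polynomial.leadingCoeff_mul, Polynomial.leadingCoeff_C, (hGm d).leadingCoeff,
            mul_one]
      obtain ⟨b, hb⟩ := ih g hsub
      refine ⟨Function.update b d f.leadingCoeff, ?_⟩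
      rw [Finset.sum_range_succ, Function.update_self]
      have : ∑ j ∈ Finset.range d, C (Function.update b d f.leadingCoeff j) * G j
          = ∑ j ∈ Finset.range d, C (b j) * G j := by
        refine Finset.sum_congr rfl (fun j hj => ?_)
        rw [Function.update_of_ne (Finset.mem_range.mp hj).ne]
      rw [this, ← hb, hg]
      ring

lemma integral_poly_congr (μ : Measure ℝ) {F : ℝ → ℝ} {p : Polynomial ℝ}
    (h : ∀ x, F x = p.eval x) : ∫ x, F x ∂μ = ∫ x, p.eval x ∂μ :=
  integral_congr_ae (Filter.Eventually.of_forall fun x => h x)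

lemma integral_evalSum_mul (μ : Measure ℝ)
    (hmom : ∀ n : ℕ, Integrable (fun x : ℝ => x ^ n) μ)
    (s : Finset ℕ) (b : ℕ → ℝ) (G : ℕ → Polynomial ℝ) (v : Polynomial ℝ) :
    ∫ x, (∑ j ∈ s, C (b j) * G j).eval x * v.eval x ∂μ
      = ∑ j ∈ s, b j * ∫ x, (G j).eval x * v.eval x ∂μ := by
  have h1 : (fun x => (∑ j ∈ s, C (b j) * G j).eval x * v.eval x)
      = fun x => ∑ j ∈ s, b j * ((G j * v).eval x) := by
    funext x
    simp [eval_finset_sum, Finset.sum_mul, mul_assoc]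
  rw [h1, integral_finset_sum]
  · refine Finset.sum_congr rfl (fun j hj => ?_)
    rw [integral_const_mul]
    congr 1
    refine integral_congr_ae (Filter.Eventually.of_forall fun x => ?_)
    simp
  · exact fun j _ => ((integrable_polyEval μ hmom (G j * v)).const_mul _)

lemma ipS_symm (μ : Measure ℝ) (c M N : ℝ) (f g : Polynomial ℝ) :
    ipS μ c M N f g = ipS μ c M N g f := by
  simp only [ipS, mul_comm]

lemma ipS_sum_left (μ : Measure ℝ)
    (hmom : ∀ n : ℕ, Integrable (fun x : ℝ => x ^ n) μ)
    (c M N : ℝ) (s : Finset ℕ) (b : ℕ → ℝ) (G : ℕ → Polynomial ℝ) (g : Polynomial ℝ) :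
    ipS μ c M N (∑ j ∈ s, C (b j) * G j) g = ∑ j ∈ s, b j * ipS μ c M N (G j) g := by
  have he : (∑ j ∈ s, C (b j) * G j).eval c * g.eval c
      = ∑ j ∈ s, b j * ((G j).eval c * g.eval c) := by
    simp [eval_finset_sum, Finset.sum_mul, mul_assoc]
  have hd : (derivative (∑ j ∈ s, C (b j) * G j)).eval c * (derivative g).eval c
      = ∑ j ∈ s, b j * ((derivative (G j)).eval c * (derivative g).eval c) := by
    simp [derivative_sum, eval_finset_sum, Finset.sum_mul, mul_assoc]
  unfold ipS
  rw [integral_evalSum_mul μ hmom, he, hd, Finset.mul_sum, Finset.mul_sum,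
    ← Finset.sum_add_distrib, ← Finset.sum_add_distrib]
  refine Finset.sum_congr rfl fun j _ => by ring

lemma ipS_doubleRoot_right (μ : Measure ℝ) (c M N : ℝ) (f p : Polynomial ℝ) :
    ipS μ c M N f ((X - C c) ^ 2 * p)
      = ∫ x, f.eval x * ((X - C c) ^ 2 * p).eval x ∂μ := by
  unfold ipS
  have h1 : ((X - C c) ^ 2 * p).eval c = 0 := by simp
  have h2 : (derivative ((X - C c) ^ 2 * p)).eval c = 0 := by
    simp [derivative_mul, derivative_pow]
  rw [h1, h2]
  ring

/-- The Christoffel bilinear form `⟨f,g⟩_[2] = ∫ f g (x-c)² dμ`. -/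
noncomputable def iw2 (μ : Measure ℝ) (c : ℝ) (f g : Polynomial ℝ) : ℝ :=
  ∫ x, f.eval x * g.eval x * (x - c) ^ 2 ∂μ

lemma iw2_shape (μ : Measure ℝ) (c : ℝ) (f g : Polynomial ℝ) :
    iw2 μ c f g = ∫ x, f.eval x * ((X - C c) ^ 2 * g).eval x ∂μ :=
  integral_congr_ae (Filter.Eventually.of_forall fun x => by simp; ring)

lemma iw2_symm (μ : Measure ℝ) (c : ℝ) (f g : Polynomial ℝ) :
    iw2 μ c f g = iw2 μ c g f := by
  unfold iw2
  exact integral_congr_ae (Filter.Eventually.of_forall fun x => by ring)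

lemma iw2_sum_left (μ : Measure ℝ)
    (hmom : ∀ n : ℕ, Integrable (fun x : ℝ => x ^ n) μ)
    (c : ℝ) (s : Finset ℕ) (b : ℕ → ℝ) (G : ℕ → Polynomial ℝ) (g : Polynomial ℝ) :
    iw2 μ c (∑ j ∈ s, C (b j) * G j) g = ∑ j ∈ s, b j * iw2 μ c (G j) g := by
  rw [iw2_shape, integral_evalSum_mul μ hmom]
  exact Finset.sum_congr rfl fun j _ => by rw [← iw2_shape]

lemma iw2_eq_ipS (μ : Measure ℝ) (c M N : ℝ) (f g : Polynomial ℝ) :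
    iw2 μ c f g = ipS μ c M N f ((X - C c) ^ 2 * g) := by
  rw [ipS_doubleRoot_right, iw2_shape]

/-- `(J_{[2]} - cI)² = Tᵀ·T` entrywise:
`Σ_j (J_{[2]}(n,j) - cδ_{nj})(J_{[2]}(j,m) - cδ_{jm}) = Σ_k γ_{n,k} γ_{m,k}`,
the sum over `k` having only finitely many nonzero terms since
`γ_{n,k} = 0` unless `n ≤ k ≤ n+2`. -/
theorem stmt17
    (μ : Measure ℝ) [IsFiniteMeasure μ]
    (hmom : ∀ n : ℕ, Integrable (fun x : ℝ => x ^ n) μ)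
    (hpos : ∀ q : Polynomial ℝ, q ≠ 0 → 0 < ∫ x, q.eval x ^ 2 ∂μ)
    (c : ℝ) (hc : ∀ᵐ x ∂μ, c < x)
    (P2 : ℕ → Polynomial ℝ) (hP2m : ∀ n, (P2 n).Monic) (hP2d : ∀ n, (P2 n).natDegree = n)
    (hP2o : ∀ m n, m ≠ n → ∫ x, (P2 m).eval x * (P2 n).eval x * (x - c) ^ 2 ∂μ = 0)
    (M N : ℝ) (hM : 0 ≤ M) (hN : 0 ≤ N)
    (S : ℕ → Polynomial ℝ) (hSm : ∀ n, (S n).Monic) (hSd : ∀ n, (S n).natDegree = n)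
    (hSo : ∀ m n, m ≠ n → ipS μ c M N (S m) (S n) = 0) :
    (∀ n k : ℕ, k < n ∨ n + 2 < k → gamC μ c M N S P2 n k = 0)
    ∧ (∀ n m : ℕ,
        ∑' j : ℕ, (J2mat μ c P2 n j - c * kdel n j) * (J2mat μ c P2 j m - c * kdel j m)
          = ∑' k : ℕ, gamC μ c M N S P2 n k * gamC μ c M N S P2 m k) := by
  -- degree facts
  have hSdeg : ∀ k : ℕ, (S k).degree < ((k + 1 : ℕ) : WithBot ℕ) := by
    intro k
    rw [Polynomial.degree_eq_natDegree (hSm k).ne_zero, hSd k]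
    exact_mod_cast Nat.lt_succ_self k
  have hWPdeg : ∀ i : ℕ, ((X - C c) * P2 i).degree < ((i + 2 : ℕ) : WithBot ℕ) := by
    intro i
    have hm : ((X - C c) * P2 i).Monic := (monic_X_sub_C c).mul (hP2m i)
    rw [Polynomial.degree_eq_natDegree hm.ne_zero,
      Polynomial.natDegree_mul (monic_X_sub_C c).ne_zero (hP2m i).ne_zero,
      Polynomial.natDegree_X_sub_C, hP2d i]
    exact_mod_cast by omega
  have hW2Pdeg : ∀ i : ℕ, ((X - C c) ^ 2 * P2 i).degree < ((i + 3 : ℕ) : WithBot ℕ) := by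
    intro i
    have hm : ((X - C c) ^ 2 * P2 i).Monic := ((monic_X_sub_C c).pow 2).mul (hP2m i)
    rw [Polynomial.degree_eq_natDegree hm.ne_zero,
      Polynomial.natDegree_mul ((monic_X_sub_C c).pow 2).ne_zero (hP2m i).ne_zero,
      Polynomial.natDegree_pow, Polynomial.natDegree_X_sub_C, hP2d i]
    exact_mod_cast by omega
  -- orthogonality toolkit
  have horth : ∀ i j : ℕ, i ≠ j → iw2 μ c (P2 i) (P2 j) = 0 := fun i j h => hP2o i j h
  have hproj2 : ∀ (f : Polynomial ℝ) (d i : ℕ), f.degree < (d : WithBot ℕ) → d ≤ i →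
      iw2 μ c f (P2 i) = 0 := by
    intro f d i hf hdi
    obtain ⟨b, hb⟩ := expand_basis P2 hP2m hP2d d f hf
    rw [hb, iw2_sum_left μ hmom]
    refine Finset.sum_eq_zero fun j hj => ?_
    rw [horth j i (by have := Finset.mem_range.mp hj; omega), mul_zero]
  have hprojS : ∀ (f : Polynomial ℝ) (d k : ℕ), f.degree < (d : WithBot ℕ) → d ≤ k →
      ipS μ c M N f (S k) = 0 := by
    intro f d k hf hdk
    obtain ⟨b, hb⟩ := expand_basis S hSm hSd d f hf
    rw [hb, ipS_sum_left μ hmom]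
    refine Finset.sum_eq_zero fun j hj => ?_
    rw [hSo j k (by have := Finset.mem_range.mp hj; omega), mul_zero]
  have hsum2 : ∀ (s : Finset ℕ) (b : ℕ → ℝ) (j : ℕ),
      (∑ l ∈ s, b l * iw2 μ c (P2 l) (P2 j))
        = if j ∈ s then b j * iw2 μ c (P2 j) (P2 j) else 0 := by
    intro s b j
    split_ifs with h
    · refine Finset.sum_eq_single_of_mem j h fun l _ hl => ?_
      rw [horth l j hl, mul_zero]
    · refine Finset.sum_eq_zero fun l hl => ?_
      rw [horth l j (fun e => h (e ▸ hl)), mul_zero]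
  have hsumS : ∀ (s : Finset ℕ) (b : ℕ → ℝ) (k : ℕ),
      (∑ l ∈ s, b l * ipS μ c M N (S l) (S k))
        = if k ∈ s then b k * ipS μ c M N (S k) (S k) else 0 := by
    intro s b k
    split_ifs with h
    · refine Finset.sum_eq_single_of_mem k h fun l _ hl => ?_
      rw [hSo l k hl, mul_zero]
    · refine Finset.sum_eq_zero fun l hl => ?_
      rw [hSo l k (fun e => h (e ▸ hl)), mul_zero]
  -- positivity and normalization
  have hpos2 : ∀ j, 0 < iw2 μ c (P2 j) (P2 j) := by
    intro j
    have h1 : iw2 μ c (P2 j) (P2 j) = ∫ x, ((P2 j * (X - C c)).eval x) ^ 2 ∂μ := by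
      unfold iw2
      refine integral_congr_ae (Filter.Eventually.of_forall fun x => ?_)
      simp only [eval_mul, eval_sub, eval_X, eval_C]
      try ring
    rw [h1]
    exact hpos _ ((hP2m j).mul (monic_X_sub_C c)).ne_zero
  have hposS : ∀ k, 0 < ipS μ c M N (S k) (S k) := by
    intro k
    have h1 : (∫ x, (S k).eval x * (S k).eval x ∂μ) = ∫ x, ((S k).eval x) ^ 2 ∂μ :=
      integral_congr_ae (Filter.Eventually.of_forall fun x => by ring)
    have h2 := hpos (S k) (hSm k).ne_zero
    have h3 : 0 ≤ M * ((S k).eval c * (S k).eval c) :=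
      mul_nonneg hM (mul_self_nonneg _)
    have h4 : 0 ≤ N * ((derivative (S k)).eval c * (derivative (S k)).eval c) :=
      mul_nonneg hN (mul_self_nonneg _)
    unfold ipS
    rw [h1]
    linarith
  have hr2sq : ∀ j, r2C μ c P2 j * r2C μ c P2 j * iw2 μ c (P2 j) (P2 j) = 1 := by
    intro j
    have hn : nrmSq2 μ c (P2 j) = iw2 μ c (P2 j) (P2 j) := by
      unfold nrmSq2 iw2
      exact integral_congr_ae (Filter.Eventually.of_forall fun x => by ring)
    unfold r2C
    rw [hn, div_mul_div_comm, one_mul, Real.mul_self_sqrt (hpos2 j).le,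
      one_div_mul_cancel (hpos2 j).ne']
  have htsq : ∀ k, tC μ c M N S k * tC μ c M N S k * ipS μ c M N (S k) (S k) = 1 := by
    intro k
    unfold tC
    rw [div_mul_div_comm, one_mul, Real.mul_self_sqrt (hposS k).le,
      one_div_mul_cancel (hposS k).ne']
  -- orthonormality in kdel form
  have honrm : ∀ i j, r2C μ c P2 i * r2C μ c P2 j * iw2 μ c (P2 i) (P2 j) = kdel i j := by
    intro i j
    by_cases h : i = j
    · subst h
      rw [kdel, if_pos rfl]
      exact hr2sq i
    · rw [horth i j h, kdel, if_neg h, mul_zero]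
  -- entry formula for the shifted Jacobi matrix
  have ha : ∀ i j, J2mat μ c P2 i j - c * kdel i j
      = r2C μ c P2 i * r2C μ c P2 j * iw2 μ c ((X - C c) * P2 i) (P2 j) := by
    intro i j
    rw [← honrm i j]
    have h1 : J2mat μ c P2 i j
        = r2C μ c P2 i * r2C μ c P2 j *
          ∫ x, (X * (P2 i * P2 j * (X - C c) ^ 2)).eval x ∂μ := by
      unfold J2mat onP2
      rw [← integral_const_mul]
      refine integral_congr_ae (Filter.Eventually.of_forall fun x => ?_)
      simp only [eval_mul, eval_pow, eval_sub, eval_X, eval_C]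
      try ring
    have h2 : iw2 μ c (P2 i) (P2 j) = ∫ x, (P2 i * P2 j * (X - C c) ^ 2).eval x ∂μ := by
      unfold iw2
      refine integral_congr_ae (Filter.Eventually.of_forall fun x => ?_)
      simp only [eval_mul, eval_pow, eval_sub, eval_X, eval_C]
      try ring
    have h3 : iw2 μ c ((X - C c) * P2 i) (P2 j)
        = ∫ x, ((X - C c) * (P2 i * P2 j * (X - C c) ^ 2)).eval x ∂μ := by
      unfold iw2
      refine integral_congr_ae (Filter.Eventually.of_forall fun x => ?_)
      simp only [eval_mul, eval_pow, eval_sub, eval_X, eval_C]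
      try ring
    have h4 : (∫ x, (X * (P2 i * P2 j * (X - C c) ^ 2)).eval x ∂μ)
        - c * ∫ x, (P2 i * P2 j * (X - C c) ^ 2).eval x ∂μ
        = ∫ x, ((X - C c) * (P2 i * P2 j * (X - C c) ^ 2)).eval x ∂μ := by
      rw [← integral_const_mul, ← integral_sub (integrable_polyEval μ hmom _)
        ((integrable_polyEval μ hmom (P2 i * P2 j * (X - C c) ^ 2)).const_mul c)]
      refine integral_congr_ae (Filter.Eventually.of_forall fun x => ?_)
      simp only [eval_mul, eval_pow, eval_sub, eval_X, eval_C]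
      try ring
    rw [h1, h2, h3, ← h4]
    ring
  -- gamma formula
  have hgam : ∀ i k, gamC μ c M N S P2 i k
      = tC μ c M N S k * r2C μ c P2 i * iw2 μ c (S k) (P2 i) := by
    intro i k
    unfold gamC sN onP2 iw2
    rw [← integral_const_mul]
    refine integral_congr_ae (Filter.Eventually.of_forall fun x => ?_)
    simp only [eval_mul, eval_C]
    try ring
  constructor
  · -- Part 1: band structure of gamma
    intro n k hk
    rw [hgam]
    rcases hk with hk | hk
    · rw [hproj2 (S k) (k + 1) n (hSdeg k) (by omega), mul_zero]
    · have h1 : iw2 μ c (S k) (P2 n) = ipS μ c M N ((X - C c) ^ 2 * P2 n) (S k) := by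
        rw [iw2_eq_ipS μ c M N, ipS_symm]
      rw [h1, hprojS _ (n + 3) k (hW2Pdeg n) (by omega), mul_zero]
  · -- Part 2
    intro n m
    obtain ⟨bn, hbn⟩ := expand_basis P2 hP2m hP2d (n + 2) ((X - C c) * P2 n) (hWPdeg n)
    obtain ⟨bm, hbm⟩ := expand_basis P2 hP2m hP2d (m + 2) ((X - C c) * P2 m) (hWPdeg m)
    obtain ⟨un, hun⟩ := expand_basis S hSm hSd (n + 3) ((X - C c) ^ 2 * P2 n) (hW2Pdeg n)
    obtain ⟨um, hum⟩ := expand_basis S hSm hSd (m + 3) ((X - C c) ^ 2 * P2 m) (hW2Pdeg m)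
    have hvaln : ∀ j, iw2 μ c ((X - C c) * P2 n) (P2 j)
        = if j ∈ Finset.range (n + 2) then bn j * iw2 μ c (P2 j) (P2 j) else 0 := by
      intro j
      nth_rewrite 1 [hbn]
      rw [iw2_sum_left μ hmom, hsum2]
    have hvalm : ∀ j, iw2 μ c ((X - C c) * P2 m) (P2 j)
        = if j ∈ Finset.range (m + 2) then bm j * iw2 μ c (P2 j) (P2 j) else 0 := by
      intro j
      nth_rewrite 1 [hbm]
      rw [iw2_sum_left μ hmom, hsum2]
    have hvalSn : ∀ k, ipS μ c M N ((X - C c) ^ 2 * P2 n) (S k)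
        = if k ∈ Finset.range (n + 3) then un k * ipS μ c M N (S k) (S k) else 0 := by
      intro k
      nth_rewrite 1 [hun]
      rw [ipS_sum_left μ hmom, hsumS]
    have hvalSm : ∀ k, ipS μ c M N ((X - C c) ^ 2 * P2 m) (S k)
        = if k ∈ Finset.range (m + 3) then um k * ipS μ c M N (S k) (S k) else 0 := by
      intro k
      nth_rewrite 1 [hum]
      rw [ipS_sum_left μ hmom, hsumS]
    have hentry : ∀ j, (J2mat μ c P2 n j - c * kdel n j) * (J2mat μ c P2 j m - c * kdel j m)
        = (r2C μ c P2 n * r2C μ c P2 j * iw2 μ c ((X - C c) * P2 n) (P2 j))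
          * (r2C μ c P2 j * r2C μ c P2 m * iw2 μ c ((X - C c) * P2 m) (P2 j)) := by
      intro j
      have hsymm : iw2 μ c ((X - C c) * P2 j) (P2 m)
          = iw2 μ c ((X - C c) * P2 m) (P2 j) := by
        unfold iw2
        refine integral_congr_ae (Filter.Eventually.of_forall fun x => ?_)
        simp only [eval_mul, eval_sub, eval_X, eval_C]
        try ring
      rw [ha n j, ha j m, hsymm]
    have hLHS : (∑' j : ℕ, (J2mat μ c P2 n j - c * kdel n j)
          * (J2mat μ c P2 j m - c * kdel j m))
        = r2C μ c P2 n * r2C μ c P2 m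
          * iw2 μ c ((X - C c) * P2 n) ((X - C c) * P2 m) := by
      have hzero : ∀ j ∉ Finset.range (n + 2),
          (J2mat μ c P2 n j - c * kdel n j) * (J2mat μ c P2 j m - c * kdel j m) = 0 := by
        intro j hj
        rw [hentry j, hvaln j, if_neg hj]
        ring
      rw [tsum_eq_sum hzero]
      have hexp : iw2 μ c ((X - C c) * P2 n) ((X - C c) * P2 m)
          = ∑ j ∈ Finset.range (n + 2), bn j * iw2 μ c ((X - C c) * P2 m) (P2 j) := by
        nth_rewrite 1 [hbn]
        rw [iw2_sum_left μ hmom]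
        exact Finset.sum_congr rfl fun j _ => by rw [iw2_symm]
      rw [hexp, Finset.mul_sum]
      refine Finset.sum_congr rfl fun j hj => ?_
      rw [hentry j, hvaln j, if_pos hj, hvalm j]
      split_ifs with h
      · linear_combination (r2C μ c P2 n * r2C μ c P2 m * bn j * bm j
          * iw2 μ c (P2 j) (P2 j)) * hr2sq j
      · ring
    have hgn : ∀ k, gamC μ c M N S P2 n k = tC μ c M N S k * r2C μ c P2 n
        * ipS μ c M N ((X - C c) ^ 2 * P2 n) (S k) := by
      intro k
      rw [hgam n k, iw2_eq_ipS μ c M N, ipS_symm]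
    have hgm2 : ∀ k, gamC μ c M N S P2 m k = tC μ c M N S k * r2C μ c P2 m
        * ipS μ c M N ((X - C c) ^ 2 * P2 m) (S k) := by
      intro k
      rw [hgam m k, iw2_eq_ipS μ c M N, ipS_symm]
    have hRHS : (∑' k : ℕ, gamC μ c M N S P2 n k * gamC μ c M N S P2 m k)
        = r2C μ c P2 n * r2C μ c P2 m
          * ipS μ c M N ((X - C c) ^ 2 * P2 n) ((X - C c) ^ 2 * P2 m) := by
      have hzero : ∀ k ∉ Finset.range (n + 3),
          gamC μ c M N S P2 n k * gamC μ c M N S P2 m k = 0 := by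
        intro k hk
        rw [hgn k, hgm2 k, hvalSn k, if_neg hk]
        ring
      rw [tsum_eq_sum hzero]
      have hexp : ipS μ c M N ((X - C c) ^ 2 * P2 n) ((X - C c) ^ 2 * P2 m)
          = ∑ k ∈ Finset.range (n + 3), un k
            * ipS μ c M N ((X - C c) ^ 2 * P2 m) (S k) := by
        nth_rewrite 1 [hun]
        rw [ipS_sum_left μ hmom]
        exact Finset.sum_congr rfl fun k _ => by rw [ipS_symm]
      rw [hexp, Finset.mul_sum]
      refine Finset.sum_congr rfl fun k hk => ?_
      rw [hgn k, hgm2 k, hvalSn k, if_pos hk, hvalSm k]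
      split_ifs with h
      · linear_combination (r2C μ c P2 n * r2C μ c P2 m * un k * um k
          * ipS μ c M N (S k) (S k)) * htsq k
      · ring
    rw [hLHS, hRHS]
    congr 1
    rw [ipS_doubleRoot_right]
    unfold iw2
    refine integral_congr_ae (Filter.Eventually.of_forall fun x => ?_)
    simp only [eval_mul, eval_pow, eval_sub, eval_X, eval_C]
    try ring
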